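/- Let T be a pruned tree on a non-empty countable set A and let X be the set of infinite branches of T with its cylinder-set topology. For a function f : X → ℝ, the following are equivalent: (1) f is a limsup function; (2) the subgraph subgr(f) = {(x,r) ∈ X × ℝ : f(x) ≥ r} is a Π⁰₂ (i.e., G_δ) subset of X × ℝ; (3) for every r ∈ ℝ, the set {x ∈ X : f(x) ≥ r} is a Π⁰₂ (i.e., G_δ) subset of X. -/

import Mathlib

/-!
A limsup function has a `G_δ` subgraph because `r ≤ limsup_t g_t x` iff for every `ε > 0` there
are infinitely many `t` with `r - ε < g_t x`, and each `g_t x = u (x₀, …, x_t)` is locally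
constant in `x`.

Conversely, enumerate `ℚ` as `(q_k)` and write each `{f ≥ q_k}` as a decreasing intersection
`⋂ n, V k n` of open sets, chosen so that `V k 0 ⊆ V j n` whenever `q_j ≤ q_k` and `j + n ≤ k`.
Along a branch `x`, `x ∈ ⋂ n, V k n` iff the number of `n` with the cylinder of `x|t` inside
`V k n` grows infinitely often. Letting `u` propose `q_k` whenever that count grows gives
`limsup ≥ f x`; by the compatibility of the `V k`, once `x ∉ V j n` every level `k ≥ j + n` with
`q_k ≥ q_j` proposes nothing at all along `x`, and the finitely many remaining ones only finitely
often, whence `limsup ≤ f x`.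
-/

open Filter Topology

/-- The initial segment `(x₀, …, x_{n-1})` of an infinite sequence `x`. -/
def initSeg {β : Type*} (x : ℕ → β) (n : ℕ) : List β :=
  List.ofFn fun i : Fin n => x i

/-- `T` is a pruned tree on `A`: it contains the empty sequence, is closed under
prefixes, and every element has a proper extension in `T`. -/
def IsPrunedTree {A : Type*} (T : Set (List A)) : Prop :=
  [] ∈ T ∧ (∀ s ∈ T, ∀ t : List A, t <+: s → t ∈ T) ∧ ∀ s ∈ T, ∃ a : A, s ++ [a] ∈ T

/-- The space `X` of infinite branches of the tree `T`, topologized as a subspace of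
the product `ℕ → A` (with `A` discrete); this is exactly the cylinder-set topology. -/
abbrev Branches {A : Type*} (T : Set (List A)) : Type _ :=
  {x : ℕ → A // ∀ n : ℕ, initSeg x n ∈ T}

/-- The cylinder set `O(s)` of all branches with initial segment `s`. -/
def cyl {A : Type*} (T : Set (List A)) (s : List A) : Set (Branches T) :=
  {x | initSeg x.val s.length = s}

/-- `f : X → ℝ` is a limsup function: there is `u` defined on finite sequences with
`f x = limsup_{t → ∞} u (x₀, …, x_t)` for every branch `x` (the limsup being computed
in the extended reals and required to equal the real number `f x`). -/
def IsLimsupFunction {A : Type*} {T : Set (List A)} (f : Branches T → ℝ) : Prop :=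
  ∃ u : List A → ℝ, ∀ x : Branches T,
    (f x : EReal) = Filter.limsup (fun t : ℕ => (u (initSeg x.val (t + 1)) : EReal)) Filter.atTop

/-- `f` is of Baire class 1: a pointwise limit of continuous functions. -/
def BaireClassOne {X : Type*} [TopologicalSpace X] (f : X → ℝ) : Prop :=
  ∃ g : ℕ → X → ℝ, (∀ n, Continuous (g n)) ∧
    ∀ x, Filter.Tendsto (fun n => g n x) Filter.atTop (nhds (f x))

/-- A Cantor set: a subset homeomorphic to the Cantor space `2^ℕ`. -/
def IsCantorSet {X : Type*} [TopologicalSpace X] (C : Set X) : Prop :=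
  Nonempty (C ≃ₜ (ℕ → Bool))

/-- A Bernstein set: neither it nor its complement contains a nonempty perfect set. -/
def IsBernsteinSet {X : Type*} [TopologicalSpace X] (B : Set X) : Prop :=
  ∀ P : Set X, Perfect P → P.Nonempty → ¬ P ⊆ B ∧ ¬ P ⊆ Bᶜ

/-- A co-analytic set: the complement of an analytic set. -/
def IsCoanalytic {X : Type*} [TopologicalSpace X] (s : Set X) : Prop :=
  MeasureTheory.AnalyticSet sᶜ

/-- The sequence of moves produced by Player I's strategy `σ` against the sequence `v`
of moves of Player II: Player I's `n`-th move depends on `(v₀, …, v_{n-1})`. -/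
def playI {A M : Type*} (σ : List M → A) (v : ℕ → M) : ℕ → A :=
  fun n => σ (initSeg v n)

/-- Player II has a winning strategy in the game `Γ(f)`: a strategy for Player II assigns
to each position `(x₀, …, x_t)` of moves of Player I a real number `v_t` (Player II's own
previous moves being determined), and it is winning if for every run, i.e. every branch
`x` that Player I may produce, `f x = limsup_{t → ∞} v_t`. -/
def PlayerIIWinsGamma {A : Type*} {T : Set (List A)} (f : Branches T → ℝ) : Prop :=
  ∃ τ : List A → ℝ, ∀ x : Branches T,
    (f x : EReal) = Filter.limsup (fun t : ℕ => (τ (initSeg x.val (t + 1)) : EReal)) Filter.atTop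

/-- Player I has a winning strategy in the game `Γ_R(f)` where Player II's moves are
restricted to `R`: a strategy for Player I assigns to each position `(v₀, …, v_{n-1})` of
moves of Player II a point of `A`, and it is winning if against every sequence of moves
of Player II in `R` the moves of Player I are legal (all initial segments lie in `T`) and
the resulting branch `x` satisfies `f x ≠ limsup_{t → ∞} v_t`. -/
def PlayerIWinsGammaR {A : Type*} {T : Set (List A)} (R : Set ℝ) (f : Branches T → ℝ) :
    Prop :=
  ∃ σ : List ℝ → A, ∀ v : ℕ → ℝ, (∀ t, v t ∈ R) →
    ∃ h : ∀ n : ℕ, initSeg (playI σ v) n ∈ T,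
      (f ⟨playI σ v, h⟩ : EReal) ≠ Filter.limsup (fun t : ℕ => (v t : EReal)) Filter.atTop

/-- Player I has a winning strategy in the game `Γ(f)`. -/
def PlayerIWinsGamma {A : Type*} {T : Set (List A)} (f : Branches T → ℝ) : Prop :=
  ∃ σ : List ℝ → A, ∀ v : ℕ → ℝ,
    ∃ h : ∀ n : ℕ, initSeg (playI σ v) n ∈ T,
      (f ⟨playI σ v, h⟩ : EReal) ≠ Filter.limsup (fun t : ℕ => (v t : EReal)) Filter.atTop

/-- Player II has a winning strategy in the game `Γ'(f)`, in which Player II's moves are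
pairs `(v_t, w_t)` of reals and Player II wins a run iff
`f x = limsup_{t → ∞} v_t = liminf_{t → ∞} w_t`. -/
def PlayerIIWinsGamma' {A : Type*} {T : Set (List A)} (f : Branches T → ℝ) : Prop :=
  ∃ τ : List A → ℝ × ℝ, ∀ x : Branches T,
    (f x : EReal) =
      Filter.limsup (fun t : ℕ => ((τ (initSeg x.val (t + 1))).1 : EReal)) Filter.atTop ∧
    (f x : EReal) =
      Filter.liminf (fun t : ℕ => ((τ (initSeg x.val (t + 1))).2 : EReal)) Filter.atTop

/-- Player I has a winning strategy in the game `Γ'(f)`. -/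
def PlayerIWinsGamma' {A : Type*} {T : Set (List A)} (f : Branches T → ℝ) : Prop :=
  ∃ σ : List (ℝ × ℝ) → A, ∀ v : ℕ → ℝ × ℝ,
    ∃ h : ∀ n : ℕ, initSeg (playI σ v) n ∈ T,
      ¬ ((f ⟨playI σ v, h⟩ : EReal) =
            Filter.limsup (fun t : ℕ => ((v t).1 : EReal)) Filter.atTop ∧
         (f ⟨playI σ v, h⟩ : EReal) =
            Filter.liminf (fun t : ℕ => ((v t).2 : EReal)) Filter.atTop)

theorem initSeg_length {β : Type*} (x : ℕ → β) (n : ℕ) : (initSeg x n).length = n := by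
  simp [initSeg]

theorem initSeg_dropLast {β : Type*} (x : ℕ → β) (n : ℕ) :
    (initSeg x (n + 1)).dropLast = initSeg x n := by
  rw [initSeg, List.ofFn_succ', List.concat_eq_append, List.dropLast_concat]
  rfl

theorem initSeg_eq_initSeg_iff {β : Type*} {x y : ℕ → β} {n : ℕ} :
    initSeg x n = initSeg y n ↔ ∀ i < n, x i = y i := by
  rw [initSeg, initSeg, List.ofFn_inj, funext_iff]
  exact ⟨fun h i hi => h ⟨i, hi⟩, fun h i => h i i.2⟩

theorem Monotone.forall_exists_lt_iff_frequently_lt_succ {a : ℕ → ℕ} (ha : Monotone a) :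
    (∀ n, ∃ t, n < a t) ↔ ∃ᶠ t in atTop, a t < a (t + 1) := by
  constructor
  · intro hunbdd hfin
    obtain ⟨N, hN⟩ := eventually_atTop.mp hfin
    have hconst : ∀ t, N ≤ t → a t = a N := fun t ht => by
      induction t, ht using Nat.le_induction with
      | base => rfl
      | succ t ht ih => exact (le_antisymm (not_lt.mp (hN t ht)) (ha t.le_succ)).trans ih
    obtain ⟨t, ht⟩ := hunbdd (a N)
    rcases le_total N t with hNt | htN
    · exact (hconst t hNt).not_gt ht
    · exact (ha htN).not_gt ht
  · intro hfreq n
    induction n with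
    | zero => obtain ⟨t, -, ht⟩ := frequently_atTop.mp hfreq 0; exact ⟨t + 1, by omega⟩
    | succ n ih =>
      obtain ⟨s, hs⟩ := ih
      obtain ⟨t, hst, ht⟩ := frequently_atTop.mp hfreq s
      exact ⟨t + 1, by have := ha hst; omega⟩

section Cylinders

variable {A : Type*} {T : Set (List A)}

theorem mem_cyl_initSeg {x y : Branches T} {t : ℕ} :
    y ∈ cyl T (initSeg x.val t) ↔ ∀ i < t, y.val i = x.val i := by
  rw [cyl, Set.mem_ofPred_eq, initSeg_length, initSeg_eq_initSeg_iff]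

theorem self_mem_cyl_initSeg (x : Branches T) (t : ℕ) : x ∈ cyl T (initSeg x.val t) :=
  mem_cyl_initSeg.mpr fun _ _ => rfl

theorem antitone_cyl_initSeg (x : Branches T) : Antitone fun t => cyl T (initSeg x.val t) :=
  fun _ _ hst _ hy => mem_cyl_initSeg.mpr fun i hi => mem_cyl_initSeg.mp hy i (by omega)

variable [TopologicalSpace A]

theorem IsOpen.exists_cyl_initSeg_subset {O : Set (Branches T)} (hO : IsOpen O)
    {x : Branches T} (hx : x ∈ O) : ∃ t, cyl T (initSeg x.val t) ⊆ O := by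
  obtain ⟨O', hO', rfl⟩ := isOpen_induced_iff.mp hO
  obtain ⟨I, v, hv, hsub⟩ := isOpen_pi_iff.mp hO' x.val hx
  refine ⟨I.sup id + 1, fun y hy => hsub fun i hi => ?_⟩
  rw [mem_cyl_initSeg.mp hy i (Nat.lt_succ_of_le (Finset.le_sup (f := id) hi))]
  exact (hv i hi).2

theorem continuous_comp_initSeg [DiscreteTopology A] {Y : Type*} [TopologicalSpace Y]
    (φ : List A → Y) (t : ℕ) : Continuous fun x : Branches T => φ (initSeg x.val t) :=
  (continuous_of_discreteTopology (f := fun v : Fin t → A => φ (List.ofFn v))).comp <|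
    continuous_pi fun i => (continuous_apply (i : ℕ)).comp continuous_subtype_val

end Cylinders

section Depth

variable {A : Type*} {T : Set (List A)}

open Classical in
noncomputable def depth (V : ℕ → Set (Branches T)) (s : List A) : ℕ :=
  ((Finset.range s.length).filter fun n => cyl T s ⊆ V n).card

variable {V : ℕ → Set (Branches T)}

theorem monotone_depth_initSeg (x : Branches T) :
    Monotone fun t => depth V (initSeg x.val t) := by
  intro s t hst
  apply Finset.card_le_card
  intro n hn
  simp only [Finset.mem_filter, Finset.mem_range, initSeg_length] at hn ⊢
  exact ⟨by omega, (antitone_cyl_initSeg x hst).trans hn.2⟩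

theorem cyl_subset_of_lt_depth (hV : Antitone V) {s : List A} {n : ℕ} (h : n < depth V s) :
    cyl T s ⊆ V n := by
  classical
  by_contra hns
  have : (Finset.range s.length).filter (fun m => cyl T s ⊆ V m) ⊆ Finset.range n := by
    intro m hm
    simp only [Finset.mem_filter, Finset.mem_range] at hm ⊢
    by_contra! hnm
    exact hns (hm.2.trans (hV hnm))
  exact h.not_ge ((Finset.card_le_card this).trans (Finset.card_range n).le)

theorem lt_depth_of_cyl_subset (hV : Antitone V) {s : List A} {n : ℕ} (hn : n < s.length)
    (h : cyl T s ⊆ V n) : n < depth V s := by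
  classical
  have : Finset.range (n + 1) ⊆ (Finset.range s.length).filter (fun m => cyl T s ⊆ V m) := by
    intro m hm
    simp only [Finset.mem_filter, Finset.mem_range] at hm ⊢
    exact ⟨by omega, h.trans (hV (by omega))⟩
  simpa [depth] using Finset.card_le_card this

theorem depth_initSeg_eq_zero (hV : Antitone V) {x : Branches T} (hx : x ∉ V 0) (t : ℕ) :
    depth V (initSeg x.val t) = 0 :=
  Nat.eq_zero_of_not_pos fun h => hx (cyl_subset_of_lt_depth hV h (self_mem_cyl_initSeg x t))

theorem mem_iInter_iff_frequently_depth_lt [TopologicalSpace A] (hVo : ∀ n, IsOpen (V n))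
    (hV : Antitone V) {x : Branches T} :
    x ∈ ⋂ n, V n ↔
      ∃ᶠ t in atTop, depth V (initSeg x.val t) < depth V (initSeg x.val (t + 1)) := by
  rw [← (monotone_depth_initSeg x).forall_exists_lt_iff_frequently_lt_succ, Set.mem_iInter]
  constructor
  · intro hx n
    obtain ⟨t, ht⟩ := (hVo n).exists_cyl_initSeg_subset (hx n)
    refine ⟨max t (n + 1), lt_depth_of_cyl_subset hV ?_ ?_⟩
    · rw [initSeg_length]; omega
    · exact (antitone_cyl_initSeg x (le_max_left _ _)).trans ht
  · intro hx n
    obtain ⟨t, ht⟩ := hx n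
    exact cyl_subset_of_lt_depth hV ht (self_mem_cyl_initSeg x t)

end Depth

theorem exists_antitone_isOpen_of_isGδ {X α : Type*} [TopologicalSpace X] [Preorder α]
    {G : ℕ → Set X} (hG : ∀ k, IsGδ (G k)) {q : ℕ → α} (hGq : ∀ j k, q j ≤ q k → G k ⊆ G j) :
    ∃ V : ℕ → ℕ → Set X, (∀ k n, IsOpen (V k n)) ∧ (∀ k, Antitone (V k)) ∧
      (∀ k, ⋂ n, V k n = G k) ∧ ∀ j k n, q j ≤ q k → j + n ≤ k → V k 0 ⊆ V j n := by
  classical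
  choose W hWo hW using fun k => (hG k).eq_iInter_nat
  let V k n := ⋂ i ∈ (Finset.range (k + n + 1)).filter (fun i => q i ≤ q k),
    ⋂ m ∈ Finset.range (k + n + 1), W i m
  have mem_V : ∀ {x k n},
      x ∈ V k n ↔ ∀ i < k + n + 1, q i ≤ q k → ∀ m < k + n + 1, x ∈ W i m := by
    intro x k n
    simp only [V, Set.mem_iInter, Finset.mem_filter, Finset.mem_range, and_imp]
  refine ⟨V, fun k n => isOpen_biInter_finset fun i _ => isOpen_biInter_finset fun m _ => hWo i m,
    fun k n n' hnn' x hx => ?_, fun k => Set.Subset.antisymm ?_ ?_, fun j k n hjk hjnk x hx => ?_⟩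
  · exact mem_V.mpr fun i hi hik m hm => mem_V.mp hx i (by omega) hik m (by omega)
  · intro x hx
    rw [hW k, Set.mem_iInter]
    exact fun m => mem_V.mp (Set.mem_iInter.mp hx m) k (by omega) le_rfl m (by omega)
  · intro x hx
    refine Set.mem_iInter.mpr fun n => mem_V.mpr fun i _ hik m _ => ?_
    have := hGq i k hik hx
    rw [hW i, Set.mem_iInter] at this
    exact this m
  · have hx' := (mem_V (n := 0)).mp hx
    exact mem_V.mpr fun i hi hij m hm => hx' i (by omega) (hij.trans hjk) m (by omega)

section Witness

variable {A : Type*} {T : Set (List A)}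

noncomputable def limsupWitness (q : ℕ → ℝ) (V : ℕ → ℕ → Set (Branches T)) (s : List A) : ℝ :=
  (Finset.range (s.length + 1)).sup' Finset.nonempty_range_add_one fun k =>
    if depth (V k) s.dropLast < depth (V k) s then q k else -s.length

variable {q : ℕ → ℝ} {V : ℕ → ℕ → Set (Branches T)}

theorem le_limsupWitness {s : List A} {k : ℕ} (hk : k ≤ s.length)
    (h : depth (V k) s.dropLast < depth (V k) s) : q k ≤ limsupWitness q V s :=
  Finset.le_sup'_of_le _ (b := k) (Finset.mem_range.mpr (by omega)) (by rw [if_pos h])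

theorem limsupWitness_le {s : List A} {c : ℝ} (hs : -(s.length : ℝ) ≤ c)
    (h : ∀ k, depth (V k) s.dropLast < depth (V k) s → q k ≤ c) : limsupWitness q V s ≤ c :=
  Finset.sup'_le _ _ fun k _ => by split_ifs with hk; exacts [h k hk, hs]

variable [TopologicalSpace A]

theorem le_limsup_limsupWitness (hVo : ∀ k n, IsOpen (V k n)) (hV : ∀ k, Antitone (V k))
    {x : Branches T} {k : ℕ} (hx : x ∈ ⋂ n, V k n) :
    (q k : EReal) ≤
      limsup (fun t => (limsupWitness q V (initSeg x.val (t + 1)) : EReal)) atTop := by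
  refine le_limsup_of_frequently_le ?_
  refine (((mem_iInter_iff_frequently_depth_lt (hVo k) (hV k)).mp hx).and_eventually
    (eventually_ge_atTop k)).mono fun t ⟨ht, hkt⟩ => EReal.coe_le_coe_iff.mpr ?_
  refine le_limsupWitness (by rw [initSeg_length]; omega) ?_
  rwa [initSeg_dropLast]

theorem limsup_limsupWitness_le (hVo : ∀ k n, IsOpen (V k n)) (hV : ∀ k, Antitone (V k))
    (hVq : ∀ j k n, q j ≤ q k → j + n ≤ k → V k 0 ⊆ V j n)
    (hVq' : ∀ j k, q j ≤ q k → ⋂ n, V k n ⊆ ⋂ n, V j n) {x : Branches T} {j : ℕ}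
    (hx : x ∉ ⋂ n, V j n) :
    limsup (fun t => (limsupWitness q V (initSeg x.val (t + 1)) : EReal)) atTop ≤ q j := by
  obtain ⟨n, hn⟩ : ∃ n, x ∉ V j n := by simpa using hx
  have h_far : ∀ k, j + n ≤ k → q j ≤ q k → ∀ t, depth (V k) (initSeg x.val t) = 0 :=
    fun k hk hjk => depth_initSeg_eq_zero (hV k) fun hx0 => hn (hVq j k n hjk hk hx0)
  have h_near : ∀ᶠ t in atTop, ∀ k ∈ Finset.range (j + n), q j ≤ q k →
      ¬ depth (V k) (initSeg x.val t) < depth (V k) (initSeg x.val (t + 1)) := by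
    refine (eventually_all_finset _).mpr fun k _ => ?_
    by_cases hjk : q j ≤ q k
    · have hxk : x ∉ ⋂ n, V k n := fun hxk => hx (hVq' j k hjk hxk)
      rw [mem_iInter_iff_frequently_depth_lt (hVo k) (hV k), not_frequently] at hxk
      exact hxk.mono fun _ ht _ => ht
    · exact Eventually.of_forall fun _ h => absurd h hjk
  refine limsup_le_of_le (by isBoundedDefault) ?_
  filter_upwards [h_near, tendsto_natCast_atTop_atTop.eventually_ge_atTop (-(q j))]
    with t ht_near ht_large
  refine EReal.coe_le_coe_iff.mpr (limsupWitness_le ?_ fun k hk => ?_)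
  · rw [initSeg_length]; push_cast; linarith
  · rw [initSeg_dropLast] at hk
    by_contra! hkj
    by_cases hjnk : j + n ≤ k
    · simp [h_far k hjnk hkj.le] at hk
    · exact ht_near k (Finset.mem_range.mpr (by omega)) hkj.le hk

end Witness

theorem isGδ_subgraph_of_eq_limsup {X : Type*} [TopologicalSpace X] {g : ℕ → X → ℝ}
    (hg : ∀ t, Continuous (g t)) {f : X → ℝ}
    (hf : ∀ x, (f x : EReal) = limsup (fun t => (g t x : EReal)) atTop) :
    IsGδ {p : X × ℝ | p.2 ≤ f p.1} := by
  have key : ∀ x (r : ℝ), r ≤ f x ↔ ∀ n : ℕ, ∃ᶠ t in atTop, r - 1 / (n + 1) < g t x := by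
    intro x r
    constructor
    · intro hr n
      have : ((r - 1 / (n + 1) : ℝ) : EReal) < limsup (fun t => (g t x : EReal)) atTop := by
        rw [← hf x, EReal.coe_lt_coe_iff]
        have : (0 : ℝ) < 1 / (n + 1) := by positivity
        linarith
      exact (frequently_lt_of_lt_limsup (by isBoundedDefault) this).mono
        fun _ => EReal.coe_lt_coe_iff.mp
    · intro h
      by_contra! hfr
      obtain ⟨n, hn⟩ := exists_nat_one_div_lt (sub_pos.mpr hfr)
      have : ((r - 1 / (n + 1) : ℝ) : EReal) ≤ f x := by
        rw [hf x]
        exact le_limsup_of_frequently_le ((h n).mono fun _ ht => EReal.coe_le_coe_iff.mpr ht.le)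
      linarith [EReal.coe_le_coe_iff.mp this]
  have hset : {p : X × ℝ | p.2 ≤ f p.1} =
      ⋂ n : ℕ, ⋂ N : ℕ, ⋃ t ≥ N, {p : X × ℝ | p.2 - 1 / (n + 1) < g t p.1} := by
    ext ⟨x, r⟩
    simp only [Set.mem_ofPred_eq, key, frequently_atTop, Set.mem_iInter, Set.mem_iUnion,
      exists_prop]
  rw [hset]
  refine .iInter fun n => .iInter fun N => IsOpen.isGδ <| isOpen_biUnion fun t _ => ?_
  exact isOpen_lt (continuous_snd.sub continuous_const) ((hg t).comp continuous_fst)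

section Branches

variable {A : Type*} [TopologicalSpace A] {T : Set (List A)} {f : Branches T → ℝ}

theorem IsLimsupFunction.isGδ_subgraph [DiscreteTopology A] (hf : IsLimsupFunction f) :
    IsGδ {p : Branches T × ℝ | p.2 ≤ f p.1} := by
  obtain ⟨u, hu⟩ := hf
  exact isGδ_subgraph_of_eq_limsup (fun t => continuous_comp_initSeg u (t + 1)) hu

theorem isLimsupFunction_of_isGδ_le (hf : ∀ r : ℝ, IsGδ {x : Branches T | r ≤ f x}) :
    IsLimsupFunction f := by
  obtain ⟨q, hq⟩ := exists_surjective_nat ℚ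
  obtain ⟨V, hVo, hV, hVf, hVq⟩ := exists_antitone_isOpen_of_isGδ
    (G := fun k => {x | (q k : ℝ) ≤ f x}) (fun k => hf _) (q := fun k => (q k : ℝ))
    fun j k hjk x hx => hjk.trans hx
  have hVq' : ∀ j k, (q j : ℝ) ≤ q k → ⋂ n, V k n ⊆ ⋂ n, V j n := fun j k hjk x hx => by
    rw [hVf] at hx ⊢
    exact hjk.trans hx
  refine ⟨limsupWitness (fun k => q k) V, fun x => le_antisymm ?_ ?_⟩
  · by_contra! h
    obtain ⟨ρ, hρ, hρf⟩ := EReal.exists_rat_btwn_of_lt h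
    obtain ⟨k, rfl⟩ := hq ρ
    have hx : x ∈ ⋂ n, V k n := by
      rw [hVf]
      exact (EReal.coe_lt_coe_iff.mp hρf).le
    exact hρ.not_ge (le_limsup_limsupWitness (q := fun k => (q k : ℝ)) hVo hV hx)
  · by_contra! h
    obtain ⟨ρ, hfρ, hρ⟩ := EReal.exists_rat_btwn_of_lt h
    obtain ⟨j, rfl⟩ := hq ρ
    have hx : x ∉ ⋂ n, V j n := by
      rw [hVf]
      exact (EReal.coe_lt_coe_iff.mp hfρ).not_ge
    exact hρ.not_ge (limsup_limsupWitness_le hVo hV hVq hVq' hx)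

end Branches

theorem limsupFunction_iff_subgraph_Gdelta_general
    {A : Type*} [TopologicalSpace A] [DiscreteTopology A]
    {T : Set (List A)} (f : Branches T → ℝ) :
    (IsLimsupFunction f ↔ IsGδ {p : Branches T × ℝ | p.2 ≤ f p.1}) ∧
    (IsLimsupFunction f ↔ ∀ r : ℝ, IsGδ {x : Branches T | r ≤ f x}) := by
  have subgraph_le : IsGδ {p : Branches T × ℝ | p.2 ≤ f p.1} →
      ∀ r : ℝ, IsGδ {x : Branches T | r ≤ f x} :=
    fun h r => h.preimage (f := (·, r)) (Continuous.prodMk_left r)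
  exact ⟨⟨IsLimsupFunction.isGδ_subgraph, fun h => isLimsupFunction_of_isGδ_le (subgraph_le h)⟩,
    ⟨fun h => subgraph_le h.isGδ_subgraph, isLimsupFunction_of_isGδ_le⟩⟩

/-- Theorem 1 (C1 ↔ C4 ↔ C5): `f` is a limsup function iff its subgraph
`{(x, r) : f x ≥ r}` is a `Π⁰₂` (i.e. `G_δ`) subset of `X × ℝ`, iff for every `r ∈ ℝ`
the set `{x : f x ≥ r}` is a `Π⁰₂` (i.e. `G_δ`) subset of `X`. -/
theorem limsupFunction_iff_subgraph_Gdelta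
    {A : Type*} [Countable A] [Nonempty A] [TopologicalSpace A] [DiscreteTopology A]
    {T : Set (List A)} (hT : IsPrunedTree T) (f : Branches T → ℝ) :
    (IsLimsupFunction f ↔ IsGδ {p : Branches T × ℝ | p.2 ≤ f p.1}) ∧
    (IsLimsupFunction f ↔ ∀ r : ℝ, IsGδ {x : Branches T | r ≤ f x}) :=
  limsupFunction_iff_subgraph_Gdelta_general f
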